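/- If G is a connected directed graph that is not a rose and c(G) > 3, then there exists a proper connected subgraph K of G such that K is not a rose and c(K) = 3. -/

import Mathlib

open scoped Classical

namespace Money

/-- A finite simple directed graph without loops, on a subset of `Fin n`. -/
structure Digraph (n : ℕ) where
  verts : Finset (Fin n)
  edges : Finset (Fin n × Fin n)
  mem_verts : ∀ e ∈ edges, e.1 ∈ verts ∧ e.2 ∈ verts
  no_loops : ∀ e ∈ edges, e.1 ≠ e.2

namespace Digraph

variable {n : ℕ}

/-- There is a directed path (possibly empty) from `i` to `j`. -/
def Reaches (G : Digraph n) : Fin n → Fin n → Prop :=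
  Relation.ReflTransGen fun a b => (a, b) ∈ G.edges

/-- `G` is connected: nonempty, and any vertex reaches any other by a directed path. -/
def Connected (G : Digraph n) : Prop :=
  G.verts.Nonempty ∧ ∀ i ∈ G.verts, ∀ j ∈ G.verts, G.Reaches i j

/-- `T` is (the edge set of) a spanning `i`-tree of `G`: every vertex `j ≠ i`
has a unique directed path in `T` to `i`. -/
def IsSpanTree (G : Digraph n) (i : Fin n) (T : Finset (Fin n × Fin n)) : Prop :=
  T ⊆ G.edges ∧
  (∀ j ∈ G.verts, j ≠ i → ∃! k, (j, k) ∈ T) ∧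
  (∀ k, (i, k) ∉ T) ∧
  ∀ j ∈ G.verts, Relation.ReflTransGen (fun a b => (a, b) ∈ T) j i

/-- The spanning-tree price of vertex `i` at edge weights `b`. -/
noncomputable def price (G : Digraph n) (i : Fin n) (b : Fin n × Fin n → ℝ) : ℝ :=
  ∑ T ∈ G.edges.powerset.filter (fun T => G.IsSpanTree i T), ∏ e ∈ T, b e

/-- The price-ratio function `b ↦ p_i(b)/p_j(b)`. -/
noncomputable def priceRatio (G : Digraph n) (i j : Fin n) (b : Fin n × Fin n → ℝ) : ℝ :=
  G.price i b / G.price j b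

/-- An edge coordinate `e` is influential for `f` (as a function on positive
weight vectors on the edges of `G`). -/
def Influential (G : Digraph n) (f : (Fin n × Fin n → ℝ) → ℝ) (e : Fin n × Fin n) : Prop :=
  ∃ b b' : Fin n × Fin n → ℝ,
    (∀ e' ∈ G.edges, 0 < b e') ∧ (∀ e' ∈ G.edges, 0 < b' e') ∧
    (∀ e', e' ≠ e → b e' = b' e') ∧ f b ≠ f b'

/-- `π_ij(G)`: the number of influential edges of the price-ratio `p_i/p_j`. -/
noncomputable def priceCplxPair (G : Digraph n) (i j : Fin n) : ℕ :=
  (G.edges.filter (fun e => G.Influential (G.priceRatio i j) e)).card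

/-- The price complexity `π(G) = max_{i ≠ j} π_ij(G)`. -/
noncomputable def priceComplexity (G : Digraph n) : ℕ :=
  ((G.verts ×ˢ G.verts).filter fun p => p.1 ≠ p.2).sup fun p => G.priceCplxPair p.1 p.2

/-- There is a directed walk of length `k` from `i` to `j`. -/
def HasWalk (G : Digraph n) (i j : Fin n) (k : ℕ) : Prop :=
  ∃ g : ℕ → Fin n, g 0 = i ∧ g k = j ∧ ∀ t < k, (g t, g (t + 1)) ∈ G.edges

/-- Length of a shortest directed path from `i` to `j`. -/
noncomputable def dist (G : Digraph n) (i j : Fin n) : ℕ := sInf {k | G.HasWalk i j k}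

/-- The time complexity `τ(G)`: the diameter of `G`. -/
noncomputable def timeComplexity (G : Digraph n) : ℕ :=
  ((G.verts ×ˢ G.verts).filter fun p => p.1 ≠ p.2).sup fun p => G.dist p.1 p.2

def outdeg (G : Digraph n) (v : Fin n) : ℕ := (G.edges.filter fun e => e.1 = v).card

def indeg (G : Digraph n) (v : Fin n) : ℕ := (G.edges.filter fun e => e.2 = v).card

/-- A directed cycle: connected, and every vertex has exactly one outgoing
and one incoming edge. -/
def IsCycleGraph (G : Digraph n) : Prop :=
  G.Connected ∧ ∀ v ∈ G.verts, G.outdeg v = 1 ∧ G.indeg v = 1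

/-- `P` is a (simple) directed path from `s` to `t`, `s ≠ t`. -/
def IsPathGraph (P : Digraph n) (s t : Fin n) : Prop :=
  s ≠ t ∧ s ∈ P.verts ∧ t ∈ P.verts ∧
  (∀ v ∈ P.verts, P.Reaches s v ∧ P.Reaches v t) ∧
  (∀ v ∈ P.verts, v ≠ t → P.outdeg v = 1) ∧ P.outdeg t = 0 ∧
  (∀ v ∈ P.verts, v ≠ s → P.indeg v = 1) ∧ P.indeg s = 0

/-- Union of two digraphs. -/
def union (G H : Digraph n) : Digraph n where
  verts := G.verts ∪ H.verts
  edges := G.edges ∪ H.edges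
  mem_verts := by
    intro e he
    rcases Finset.mem_union.mp he with h | h
    · exact ⟨Finset.mem_union_left _ (G.mem_verts e h).1,
        Finset.mem_union_left _ (G.mem_verts e h).2⟩
    · exact ⟨Finset.mem_union_right _ (H.mem_verts e h).1,
        Finset.mem_union_right _ (H.mem_verts e h).2⟩
  no_loops := by
    intro e he
    rcases Finset.mem_union.mp he with h | h
    · exact G.no_loops e h
    · exact H.no_loops e h

/-- A chorded cycle: a directed cycle `C` together with a directed path `P`
joining two distinct vertices of `C`, otherwise disjoint from `C`. -/
def IsChordedCycle (G : Digraph n) : Prop :=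
  ∃ (C P : Digraph n) (s t : Fin n),
    C.IsCycleGraph ∧ P.IsPathGraph s t ∧ s ∈ C.verts ∧ t ∈ C.verts ∧
    P.verts ∩ C.verts = {s, t} ∧ Disjoint C.edges P.edges ∧ G = C.union P

/-- A `k`-rose: `k` directed cycles sharing a single common vertex, otherwise
pairwise disjoint.  A `0`-rose is a single vertex. -/
def IsRose (G : Digraph n) (k : ℕ) : Prop :=
  ∃ (j : Fin n) (C : Fin k → Digraph n),
    (∀ i, (C i).IsCycleGraph) ∧ (∀ i, j ∈ (C i).verts) ∧
    (∀ i i', i ≠ i' → (C i).verts ∩ (C i').verts = {j}) ∧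
    G.verts = insert j (Finset.univ.biUnion fun i => (C i).verts) ∧
    G.edges = Finset.univ.biUnion fun i => (C i).edges

/-- `H` is a subgraph of `G` (obtained by deleting some edges and vertices). -/
def IsSubgraph (H G : Digraph n) : Prop := H.verts ⊆ G.verts ∧ H.edges ⊆ G.edges

/-- The circuit rank `c(G) = e(G) - v(G) + 1`. -/
def circuitRank (G : Digraph n) : ℤ := (G.edges.card : ℤ) - (G.verts.card : ℤ) + 1

/-- The edge `ij` is collapsible. -/
def Collapsible (G : Digraph n) (i j : Fin n) : Prop :=
  (i, j) ∈ G.edges ∧ G.outdeg i = 1 ∧ (j, i) ∉ G.edges ∧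
  ∀ k, ¬((k, i) ∈ G.edges ∧ (k, j) ∈ G.edges)

/-- `G` is rigid: no collapsible edges. -/
def Rigid (G : Digraph n) : Prop := ∀ i j, ¬G.Collapsible i j

/-- `k` covers the ordinary vertex `i` (whose unique outgoing edge is `ij`). -/
def Covers (G : Digraph n) (k i : Fin n) : Prop :=
  G.outdeg i = 1 ∧ ∃ j, (i, j) ∈ G.edges ∧
    (((k, i) ∈ G.edges ∧ (k, j) ∈ G.edges) ∨ (k = j ∧ (j, i) ∈ G.edges))

/-- A star on all of `Fin n`: a center joined to every other vertex by a pair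
of oppositely directed edges, and no other edges. -/
def IsStar (G : Digraph n) : Prop :=
  ∃ c : Fin n, G.verts = Finset.univ ∧
    G.edges = Finset.univ.filter fun e => (e.1 = c ∧ e.2 ≠ c) ∨ (e.2 = c ∧ e.1 ≠ c)

/-- The complete directed graph on all of `Fin n`. -/
def IsComplete (G : Digraph n) : Prop :=
  G.verts = Finset.univ ∧ G.edges = Finset.univ.filter fun e => e.1 ≠ e.2

/-- A chorded triangle: a 3-cycle `u → v → w → u` together with the
bidirected pair between `u` and `w`. -/
def IsChordedTriangle (T : Digraph n) : Prop :=
  ∃ u v w : Fin n, u ≠ v ∧ v ≠ w ∧ u ≠ w ∧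
    T.verts = {u, v, w} ∧ T.edges = {(u, w), (w, u), (u, v), (v, w)}

end Digraph

end Money

open Money Money.Digraph

/-!
Peel off ears. A connected digraph `K` with an edge is a maximal proper connected subgraph `H`
plus one ear (a walk outside `H` between vertices of `H`), and `c(H) = c(K) - 1`. Descend this
way to circuit rank `3` while avoiding roses: if some `H` on the way is a `k`-rose (`k ≥ 3`), its
ear cannot close up at the centre (else `K` would be a `(k+1)`-rose), so the ear together with
two petals containing its end points has circuit rank `3` and two vertices of degree at least
`2`, hence is not a rose. A subgraph of rank `3` is proper because `c(G) > 3`.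
-/

namespace Money.Digraph

open Finset

variable {n : ℕ}

theorem ext {G H : Digraph n} (hv : G.verts = H.verts) (he : G.edges = H.edges) : G = H := by
  cases G
  cases H
  congr

section Subgraph

variable {G H K : Digraph n}

theorem IsSubgraph.refl (G : Digraph n) : G.IsSubgraph G := ⟨subset_rfl, subset_rfl⟩

theorem IsSubgraph.trans (h₁ : G.IsSubgraph H) (h₂ : H.IsSubgraph K) : G.IsSubgraph K :=
  ⟨h₁.1.trans h₂.1, h₁.2.trans h₂.2⟩

theorem isSubgraph_union_left (G H : Digraph n) : G.IsSubgraph (G.union H) :=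
  ⟨subset_union_left, subset_union_left⟩

theorem union_isSubgraph (hG : G.IsSubgraph K) (hH : H.IsSubgraph K) :
    (G.union H).IsSubgraph K :=
  ⟨union_subset hG.1 hH.1, union_subset hG.2 hH.2⟩

theorem IsSubgraph.union_left (h : G.IsSubgraph H) (K : Digraph n) :
    (G.union K).IsSubgraph (H.union K) :=
  ⟨union_subset_union_left h.1, union_subset_union_left h.2⟩

end Subgraph

theorem Reaches.mono {G H : Digraph n} (h : G.edges ⊆ H.edges) {a b : Fin n}
    (hab : G.Reaches a b) : H.Reaches a b :=
  Relation.ReflTransGen.mono (fun _ _ hxy => h hxy) _ _ hab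

theorem Reaches.exists_hasWalk {G : Digraph n} {a b : Fin n} (h : G.Reaches a b) :
    ∃ k, G.HasWalk a b k := by
  induction h with
  | refl => exact ⟨0, fun _ => a, rfl, rfl, by simp⟩
  | @tail b c _ hbc ih =>
    obtain ⟨k, f, hf0, hfk, hf⟩ := ih
    refine ⟨k + 1, fun m => if m ≤ k then f m else c, by simp [hf0], by simp, fun t ht => ?_⟩
    rcases Nat.lt_or_ge t k with htk | htk
    · simpa [htk.le, Nat.succ_le_of_lt htk] using hf t htk
    · obtain rfl : t = k := by omega
      simpa [hfk] using hbc

theorem disjoint_edges_of_inter_subset {G H : Digraph n} {j : Fin n}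
    (h : G.verts ∩ H.verts ⊆ {j}) : Disjoint G.edges H.edges := by
  refine disjoint_left.mpr fun e heG heH => G.no_loops e heG ?_
  have h₁ := h (mem_inter.mpr ⟨(G.mem_verts e heG).1, (H.mem_verts e heH).1⟩)
  have h₂ := h (mem_inter.mpr ⟨(G.mem_verts e heG).2, (H.mem_verts e heH).2⟩)
  rw [mem_singleton] at h₁ h₂
  rw [h₁, h₂]

theorem circuitRank_union_of_inter_eq_singleton {G H : Digraph n} {j : Fin n}
    (h : G.verts ∩ H.verts = {j}) :
    (G.union H).circuitRank = G.circuitRank + H.circuitRank := by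
  have hE := card_union_of_disjoint (disjoint_edges_of_inter_subset h.subset)
  have hV := card_union_add_card_inter G.verts H.verts
  rw [h, card_singleton] at hV
  simp only [circuitRank, union] at hE ⊢
  omega

section Degree

variable {G : Digraph n} {v : Fin n}

theorem exists_out_edge_of_outdeg_pos (h : 0 < G.outdeg v) : ∃ w, (v, w) ∈ G.edges := by
  obtain ⟨⟨u, w⟩, he⟩ := card_pos.mp h
  obtain ⟨hmem, rfl : u = v⟩ := mem_filter.mp he
  exact ⟨w, hmem⟩

theorem exists_in_edge_of_indeg_pos (h : 0 < G.indeg v) : ∃ u, (u, v) ∈ G.edges := by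
  obtain ⟨⟨u, w⟩, he⟩ := card_pos.mp h
  obtain ⟨hmem, rfl : w = v⟩ := mem_filter.mp he
  exact ⟨u, hmem⟩

theorem eq_of_outdeg_le_one (h : G.outdeg v ≤ 1) {w₁ w₂ : Fin n} (h₁ : (v, w₁) ∈ G.edges)
    (h₂ : (v, w₂) ∈ G.edges) : w₁ = w₂ :=
  congrArg Prod.snd (card_le_one.mp h _ (mem_filter.mpr ⟨h₁, rfl⟩) _ (mem_filter.mpr ⟨h₂, rfl⟩))

theorem eq_of_indeg_le_one (h : G.indeg v ≤ 1) {u₁ u₂ : Fin n} (h₁ : (u₁, v) ∈ G.edges)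
    (h₂ : (u₂, v) ∈ G.edges) : u₁ = u₂ :=
  congrArg Prod.fst (card_le_one.mp h _ (mem_filter.mpr ⟨h₁, rfl⟩) _ (mem_filter.mpr ⟨h₂, rfl⟩))

theorem card_edges_eq_sum_outdeg (G : Digraph n) : G.edges.card = ∑ v ∈ G.verts, G.outdeg v :=
  card_eq_sum_card_fiberwise fun e he => (G.mem_verts e he).1

end Degree

namespace IsCycleGraph

variable {C : Digraph n} {v : Fin n}

theorem exists_out_edge (hC : C.IsCycleGraph) (hv : v ∈ C.verts) : ∃ w, (v, w) ∈ C.edges :=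
  exists_out_edge_of_outdeg_pos ((hC.2 v hv).1 ▸ Nat.one_pos)

theorem exists_in_edge (hC : C.IsCycleGraph) (hv : v ∈ C.verts) : ∃ u, (u, v) ∈ C.edges :=
  exists_in_edge_of_indeg_pos ((hC.2 v hv).2 ▸ Nat.one_pos)

theorem eq_of_out_edges (hC : C.IsCycleGraph) {w₁ w₂ : Fin n} (h₁ : (v, w₁) ∈ C.edges)
    (h₂ : (v, w₂) ∈ C.edges) : w₁ = w₂ :=
  eq_of_outdeg_le_one (hC.2 v (C.mem_verts _ h₁).1).1.le h₁ h₂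

theorem eq_of_in_edges (hC : C.IsCycleGraph) {u₁ u₂ : Fin n} (h₁ : (u₁, v) ∈ C.edges)
    (h₂ : (u₂, v) ∈ C.edges) : u₁ = u₂ :=
  eq_of_indeg_le_one (hC.2 v (C.mem_verts _ h₁).2).2.le h₁ h₂

theorem card_edges (hC : C.IsCycleGraph) : C.edges.card = C.verts.card := by
  rw [card_edges_eq_sum_outdeg, card_eq_sum_ones]
  exact sum_congr rfl fun v hv => (hC.2 v hv).1

theorem circuitRank_eq_one (hC : C.IsCycleGraph) : C.circuitRank = 1 := by
  simp [Digraph.circuitRank, hC.card_edges]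

end IsCycleGraph

theorem Connected.union {G D : Digraph n} (hG : G.Connected)
    (hD : ∀ v ∈ D.verts, (∃ u ∈ G.verts, D.Reaches u v) ∧ ∃ w ∈ G.verts, D.Reaches v w) :
    (G.union D).Connected := by
  have hGU : ∀ {a b}, G.Reaches a b → (G.union D).Reaches a b := Reaches.mono subset_union_left
  have hDU : ∀ {a b}, D.Reaches a b → (G.union D).Reaches a b := Reaches.mono subset_union_right
  have hto : ∀ v ∈ (G.union D).verts, ∃ w ∈ G.verts, (G.union D).Reaches v w := by
    intro v hv
    rcases mem_union.mp hv with hv | hv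
    · exact ⟨v, hv, .refl⟩
    · obtain ⟨w, hw, hvw⟩ := (hD v hv).2
      exact ⟨w, hw, hDU hvw⟩
  have hfrom : ∀ v ∈ (G.union D).verts, ∃ u ∈ G.verts, (G.union D).Reaches u v := by
    intro v hv
    rcases mem_union.mp hv with hv | hv
    · exact ⟨v, hv, .refl⟩
    · obtain ⟨u, hu, huv⟩ := (hD v hv).1
      exact ⟨u, hu, hDU huv⟩
  refine ⟨hG.1.mono subset_union_left, fun x hx y hy => ?_⟩
  obtain ⟨w, hw, hxw⟩ := hto x hx
  obtain ⟨u, hu, huy⟩ := hfrom y hy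
  exact (hxw.trans (hGU (hG.2 w hw u hu))).trans huy

theorem Connected.union_of_mem {G D : Digraph n} {j : Fin n} (hG : G.Connected)
    (hD : D.Connected) (hjG : j ∈ G.verts) (hjD : j ∈ D.verts) : (G.union D).Connected :=
  hG.union fun v hv => ⟨⟨j, hjG, hD.2 j hjD v hv⟩, j, hjG, hD.2 v hv j hjD⟩

def IsBranchVertex (G : Digraph n) (v : Fin n) : Prop :=
  (∃ w₁ w₂, w₁ ≠ w₂ ∧ (v, w₁) ∈ G.edges ∧ (v, w₂) ∈ G.edges) ∨
    ∃ u₁ u₂, u₁ ≠ u₂ ∧ (u₁, v) ∈ G.edges ∧ (u₂, v) ∈ G.edges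

theorem IsBranchVertex.mono {G H : Digraph n} {v : Fin n} (hv : G.IsBranchVertex v)
    (h : G.edges ⊆ H.edges) : H.IsBranchVertex v := by
  rcases hv with ⟨w₁, w₂, hne, h₁, h₂⟩ | ⟨u₁, u₂, hne, h₁, h₂⟩
  exacts [Or.inl ⟨w₁, w₂, hne, h h₁, h h₂⟩, Or.inr ⟨u₁, u₂, hne, h h₁, h h₂⟩]

theorem isBranchVertex_union_of_inter_eq_singleton {C D : Digraph n} {j : Fin n}
    (hC : C.IsCycleGraph) (hD : D.IsCycleGraph) (h : C.verts ∩ D.verts = {j}) :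
    (C.union D).IsBranchVertex j := by
  have hj := mem_inter.mp (h ▸ mem_singleton_self j)
  obtain ⟨w₁, h₁⟩ := hC.exists_out_edge hj.1
  obtain ⟨w₂, h₂⟩ := hD.exists_out_edge hj.2
  refine Or.inl ⟨w₁, w₂, fun hw => C.no_loops _ h₁ ?_, mem_union_left _ h₁, mem_union_right _ h₂⟩
  have hw₁ : w₁ ∈ C.verts ∩ D.verts :=
    mem_inter.mpr ⟨(C.mem_verts _ h₁).2, hw ▸ (D.mem_verts _ h₂).2⟩
  rw [h, mem_singleton] at hw₁
  exact hw₁.symm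

def IsRoseAt (G : Digraph n) (k : ℕ) (j : Fin n) : Prop :=
  ∃ C : Fin k → Digraph n,
    (∀ i, (C i).IsCycleGraph) ∧ (∀ i, j ∈ (C i).verts) ∧
    (∀ i i', i ≠ i' → (C i).verts ∩ (C i').verts = {j}) ∧
    G.verts = insert j (Finset.univ.biUnion fun i => (C i).verts) ∧
    G.edges = Finset.univ.biUnion fun i => (C i).edges

theorem isRose_iff {G : Digraph n} {k : ℕ} : G.IsRose k ↔ ∃ j, G.IsRoseAt k j := Iff.rfl

namespace IsRoseAt

variable {G : Digraph n} {k : ℕ} {j : Fin n}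

theorem eq_of_isBranchVertex (hG : G.IsRoseAt k j) {v : Fin n} (hv : G.IsBranchVertex v) :
    v = j := by
  obtain ⟨C, hC, -, hpair, -, hE⟩ := hG
  have hpetals : ∀ {i i'}, i ≠ i' → v ∈ (C i).verts → v ∈ (C i').verts → v = j :=
    fun hii' h h' => mem_singleton.mp (hpair _ _ hii' ▸ mem_inter.mpr ⟨h, h'⟩)
  rcases hv with ⟨w₁, w₂, hne, h₁, h₂⟩ | ⟨u₁, u₂, hne, h₁, h₂⟩ <;>
    obtain ⟨i₁, -, h₁⟩ := mem_biUnion.mp (hE ▸ h₁) <;>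
    obtain ⟨i₂, -, h₂⟩ := mem_biUnion.mp (hE ▸ h₂) <;>
    obtain rfl | hi := eq_or_ne i₁ i₂
  · exact absurd ((hC i₁).eq_of_out_edges h₁ h₂) hne
  · exact hpetals hi ((C i₁).mem_verts _ h₁).1 ((C i₂).mem_verts _ h₂).1
  · exact absurd ((hC i₁).eq_of_in_edges h₁ h₂) hne
  · exact hpetals hi ((C i₁).mem_verts _ h₁).2 ((C i₂).mem_verts _ h₂).2

theorem circuitRank_eq (hG : G.IsRoseAt k j) : G.circuitRank = k := by
  obtain ⟨C, hC, hj, hpair, hV, hE⟩ := hG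
  have hE' : G.edges.card = ∑ i, ((C i).verts.erase j).card + k := calc
    G.edges.card = ∑ i, (C i).verts.card := by
      rw [hE, card_biUnion fun i _ i' _ hii' =>
        disjoint_edges_of_inter_subset (hpair i i' hii').subset]
      exact sum_congr rfl fun i _ => (hC i).card_edges
    _ = ∑ i, (((C i).verts.erase j).card + 1) :=
      sum_congr rfl fun i _ => (card_erase_add_one (hj i)).symm
    _ = _ := by simp [sum_add_distrib]
  have hV' : G.verts = insert j (univ.biUnion fun i => (C i).verts.erase j) := by
    rw [hV]
    ext x
    simp only [mem_insert, mem_biUnion, mem_univ, true_and, mem_erase]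
    tauto
  have hdisj : ∀ i ∈ (univ : Finset (Fin k)), ∀ i' ∈ univ, i ≠ i' →
      Disjoint ((C i).verts.erase j) ((C i').verts.erase j) := by
    refine fun i _ i' _ hii' => disjoint_left.mpr fun x hx hx' => (mem_erase.mp hx).1 ?_
    exact mem_singleton.mp (hpair i i' hii' ▸ mem_inter.mpr ⟨mem_of_mem_erase hx,
      mem_of_mem_erase hx'⟩)
  rw [Digraph.circuitRank, hE', hV', card_insert_of_notMem (by simp), card_biUnion hdisj]
  push_cast
  ring

theorem union_cycle (hG : G.IsRoseAt k j) {D : Digraph n} (hD : D.IsCycleGraph)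
    (h : D.verts ∩ G.verts = {j}) : (G.union D).IsRoseAt (k + 1) j := by
  obtain ⟨C, hC, hj, hpair, hV, hE⟩ := hG
  have hCG : ∀ i, (C i).verts ⊆ G.verts := fun i x hx =>
    hV ▸ mem_insert_of_mem (mem_biUnion.mpr ⟨i, mem_univ _, hx⟩)
  have hjD : j ∈ D.verts := (mem_inter.mp (h ▸ mem_singleton_self j)).1
  have hDC : ∀ i, D.verts ∩ (C i).verts = {j} := fun i =>
    subset_antisymm ((inter_subset_inter_left (hCG i)).trans h.subset)
      (singleton_subset_iff.mpr (mem_inter.mpr ⟨hjD, hj i⟩))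
  refine ⟨Fin.snoc (α := fun _ => Digraph n) C D, ?_, ?_, ?_, ?_, ?_⟩
  · exact Fin.lastCases (by simpa using hD) fun i => by simpa using hC i
  · exact Fin.lastCases (by simpa using hjD) fun i => by simpa using hj i
  · intro i i'
    induction i using Fin.lastCases <;> induction i' using Fin.lastCases
    · simp
    · simpa using fun _ => hDC _
    · simpa [inter_comm] using hDC _
    · simpa using hpair _ _
  · ext x
    simp only [union, hV, mem_union, mem_insert, mem_biUnion, mem_univ, true_and,
      Fin.exists_fin_succ', Fin.snoc_castSucc, Fin.snoc_last]
    tauto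
  · ext e
    simp only [union, hE, mem_union, mem_biUnion, mem_univ, true_and,
      Fin.exists_fin_succ', Fin.snoc_castSucc, Fin.snoc_last]

end IsRoseAt

theorem not_isRose_of_isBranchVertex {G : Digraph n} {u v : Fin n} (huv : u ≠ v)
    (hu : G.IsBranchVertex u) (hv : G.IsBranchVertex v) (k : ℕ) : ¬G.IsRose k := fun h => by
  obtain ⟨j, hj⟩ := isRose_iff.mp h
  exact huv ((hj.eq_of_isBranchVertex hu).trans (hj.eq_of_isBranchVertex hv).symm)

def walkGraph (g : ℕ → Fin n) (p : ℕ) (hg : ∀ i < p, g i ≠ g (i + 1)) : Digraph n where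
  verts := (range (p + 1)).image g
  edges := (range p).image fun i => (g i, g (i + 1))
  mem_verts := by
    simp only [mem_image, mem_range]
    rintro _ ⟨i, hi, rfl⟩
    exact ⟨⟨i, by omega, rfl⟩, ⟨i + 1, by omega, rfl⟩⟩
  no_loops := by
    simp only [mem_image, mem_range]
    rintro _ ⟨i, hi, rfl⟩
    exact hg i hi

section walkGraph

variable {g : ℕ → Fin n} {p : ℕ} {hg : ∀ i < p, g i ≠ g (i + 1)}

theorem mem_walkGraph_verts {x : Fin n} : x ∈ (walkGraph g p hg).verts ↔ ∃ i ≤ p, g i = x := by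
  simp [walkGraph]

theorem mem_walkGraph_edges {e : Fin n × Fin n} :
    e ∈ (walkGraph g p hg).edges ↔ ∃ i < p, (g i, g (i + 1)) = e := by
  simp [walkGraph]

theorem walkGraph_reaches {i i' : ℕ} (hii' : i ≤ i') (hi' : i' ≤ p) :
    (walkGraph g p hg).Reaches (g i) (g i') := by
  induction i', hii' using Nat.le_induction with
  | base => exact .refl
  | succ i' _ ih => exact (ih (by omega)).tail (mem_walkGraph_edges.mpr ⟨i', by omega, rfl⟩)

theorem card_walkGraph_edges (hinj : Set.InjOn g (Set.Iio p)) :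
    (walkGraph g p hg).edges.card = p := by
  rw [walkGraph, card_image_of_injOn, card_range]
  exact fun i hi i' hi' h => hinj (by simpa using hi) (by simpa using hi') (Prod.ext_iff.mp h).1

theorem walkGraph_outdeg (hinj : Set.InjOn g (Set.Iio p)) {i : ℕ} (hi : i < p) :
    (walkGraph g p hg).outdeg (g i) = 1 := by
  refine card_eq_one.mpr ⟨(g i, g (i + 1)), Finset.ext fun e => ?_⟩
  simp only [mem_filter, mem_walkGraph_edges, mem_singleton]
  constructor
  · rintro ⟨⟨m, hm, rfl⟩, h⟩
    rw [hinj (Set.mem_Iio.mpr hm) (Set.mem_Iio.mpr hi) h]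
  · rintro rfl
    exact ⟨⟨i, hi, rfl⟩, rfl⟩

theorem walkGraph_indeg (hinj : Set.InjOn g (Set.Ioc 0 p)) {i : ℕ} (hi : 0 < i) (hip : i ≤ p) :
    (walkGraph g p hg).indeg (g i) = 1 := by
  obtain ⟨i, rfl⟩ : ∃ i', i = i' + 1 := ⟨i - 1, by omega⟩
  refine card_eq_one.mpr ⟨(g i, g (i + 1)), Finset.ext fun e => ?_⟩
  simp only [mem_filter, mem_walkGraph_edges, mem_singleton]
  constructor
  · rintro ⟨⟨m, hm, rfl⟩, h⟩
    have : m + 1 = i + 1 := hinj ⟨by omega, by omega⟩ ⟨hi, hip⟩ h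
    rw [show m = i by omega]
  · rintro rfl
    exact ⟨⟨i, by omega, rfl⟩, rfl⟩

end walkGraph

structure IsEar (H : Digraph n) (g : ℕ → Fin n) (p : ℕ) : Prop where
  pos : 0 < p
  start_mem : g 0 ∈ H.verts
  end_mem : g p ∈ H.verts
  not_mem : ∀ i, 0 < i → i < p → g i ∉ H.verts
  injOn : Set.InjOn g (Set.Ioo 0 p)
  ne_succ : ∀ i < p, g i ≠ g (i + 1)
  edge_not_mem : ∀ i < p, (g i, g (i + 1)) ∉ H.edges

namespace IsEar

variable {H : Digraph n} {g : ℕ → Fin n} {p : ℕ}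

abbrev graph (he : IsEar H g p) : Digraph n := walkGraph g p he.ne_succ

variable (he : IsEar H g p)
include he

theorem mem_verts_iff {i : ℕ} (hi : i ≤ p) : g i ∈ H.verts ↔ i = 0 ∨ i = p := by
  refine ⟨fun h => ?_, ?_⟩
  · by_contra hne
    exact he.not_mem i (by omega) (by omega) h
  · rintro (rfl | rfl)
    exacts [he.start_mem, he.end_mem]

theorem injOn_Iio : Set.InjOn g (Set.Iio p) := by
  intro i (hi : i < p) i' (hi' : i' < p) h
  rcases Nat.eq_zero_or_pos i with rfl | hpos <;> rcases Nat.eq_zero_or_pos i' with rfl | hpos'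
  · rfl
  · exact absurd (h ▸ he.start_mem) (he.not_mem i' hpos' hi')
  · exact absurd (h ▸ he.start_mem) (he.not_mem i hpos hi)
  · exact he.injOn ⟨hpos, hi⟩ ⟨hpos', hi'⟩ h

theorem injOn_Ioc : Set.InjOn g (Set.Ioc 0 p) := by
  intro i ⟨hi0, hi⟩ i' ⟨hi0', hi'⟩ h
  rcases hi.lt_or_eq with hi | rfl <;> rcases hi'.lt_or_eq with hi' | rfl
  · exact he.injOn ⟨hi0, hi⟩ ⟨hi0', hi'⟩ h
  · exact absurd (h ▸ he.end_mem) (he.not_mem i hi0 hi)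
  · exact absurd (h ▸ he.end_mem) (he.not_mem i' hi0' hi')
  · rfl

theorem graph_verts_sdiff : he.graph.verts \ H.verts = (Ioo 0 p).image g := by
  ext x
  simp only [mem_sdiff, mem_walkGraph_verts, mem_image, mem_Ioo]
  constructor
  · rintro ⟨⟨i, hi, rfl⟩, hx⟩
    rw [he.mem_verts_iff hi] at hx
    exact ⟨i, by omega, rfl⟩
  · rintro ⟨i, ⟨h0, hp⟩, rfl⟩
    exact ⟨⟨i, hp.le, rfl⟩, he.not_mem i h0 hp⟩

theorem graph_verts_inter : he.graph.verts ∩ H.verts = {g 0, g p} := by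
  ext x
  simp only [mem_inter, mem_walkGraph_verts, mem_insert, mem_singleton]
  constructor
  · rintro ⟨⟨i, hi, rfl⟩, hx⟩
    rcases (he.mem_verts_iff hi).mp hx with rfl | rfl
    exacts [Or.inl rfl, Or.inr rfl]
  · rintro (rfl | rfl)
    exacts [⟨⟨0, Nat.zero_le p, rfl⟩, he.start_mem⟩, ⟨⟨p, le_rfl, rfl⟩, he.end_mem⟩]

theorem card_union_verts : (H.union he.graph).verts.card = H.verts.card + (p - 1) := by
  have hinj : Set.InjOn g ↑(Ioo 0 p) := by
    rw [coe_Ioo]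
    exact he.injOn
  show (H.verts ∪ he.graph.verts).card = _
  rw [union_comm, ← card_sdiff_add_card, he.graph_verts_sdiff, card_image_of_injOn hinj,
    Nat.card_Ioo]
  omega

theorem card_union_edges : (H.union he.graph).edges.card = H.edges.card + p := by
  have hdisj : Disjoint H.edges he.graph.edges := disjoint_right.mpr fun e hE => by
    obtain ⟨i, hi, rfl⟩ := mem_walkGraph_edges.mp hE
    exact he.edge_not_mem i hi
  show (H.edges ∪ he.graph.edges).card = _
  rw [card_union_of_disjoint hdisj, card_walkGraph_edges he.injOn_Iio]

theorem circuitRank_union : (H.union he.graph).circuitRank = H.circuitRank + 1 := by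
  have hV := he.card_union_verts
  have hE := he.card_union_edges
  have hp := he.pos
  simp only [circuitRank]
  omega

theorem connected_union (hH : H.Connected) : (H.union he.graph).Connected :=
  hH.union fun v hv => by
    obtain ⟨i, hi, rfl⟩ := mem_walkGraph_verts.mp hv
    exact ⟨⟨g 0, he.start_mem, walkGraph_reaches (Nat.zero_le i) hi⟩,
      g p, he.end_mem, walkGraph_reaches hi le_rfl⟩

theorem mono {H' : Digraph n} (hsub : H'.IsSubgraph H) (h0 : g 0 ∈ H'.verts)
    (hp : g p ∈ H'.verts) : IsEar H' g p where
  pos := he.pos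
  start_mem := h0
  end_mem := hp
  not_mem i hi hip hg := he.not_mem i hi hip (hsub.1 hg)
  injOn := he.injOn
  ne_succ := he.ne_succ
  edge_not_mem i hi hE := he.edge_not_mem i hi (hsub.2 hE)

theorem isCycleGraph_graph (hclosed : g p = g 0) : he.graph.IsCycleGraph := by
  refine ⟨⟨⟨g 0, mem_walkGraph_verts.mpr ⟨0, Nat.zero_le p, rfl⟩⟩, ?_⟩, fun v hv => ?_⟩
  · intro x hx y hy
    obtain ⟨i, hi, rfl⟩ := mem_walkGraph_verts.mp hx
    obtain ⟨i', hi', rfl⟩ := mem_walkGraph_verts.mp hy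
    have hround : he.graph.Reaches (g p) (g i') := by
      rw [hclosed]
      exact walkGraph_reaches (Nat.zero_le i') hi'
    exact (walkGraph_reaches hi le_rfl).trans hround
  obtain ⟨i, hi, rfl⟩ := mem_walkGraph_verts.mp hv
  constructor
  · rcases hi.lt_or_eq with hi | rfl
    · exact walkGraph_outdeg he.injOn_Iio hi
    · rw [hclosed]
      exact walkGraph_outdeg he.injOn_Iio he.pos
  · rcases Nat.eq_zero_or_pos i with rfl | hi0
    · rw [← hclosed]
      exact walkGraph_indeg he.injOn_Ioc he.pos le_rfl
    · exact walkGraph_indeg he.injOn_Ioc hi0 hi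

theorem isBranchVertex_start {w : Fin n} (hw : (g 0, w) ∈ H.edges) :
    (H.union he.graph).IsBranchVertex (g 0) :=
  Or.inl ⟨w, g 1, fun h => he.edge_not_mem 0 he.pos (h ▸ hw), mem_union_left _ hw,
    mem_union_right _ (mem_walkGraph_edges.mpr ⟨0, he.pos, rfl⟩)⟩

theorem isBranchVertex_end {u : Fin n} (hu : (u, g p) ∈ H.edges) :
    (H.union he.graph).IsBranchVertex (g p) := by
  obtain ⟨q, rfl⟩ : ∃ q, p = q + 1 := ⟨p - 1, by have := he.pos; omega⟩
  exact Or.inr ⟨u, g q, fun h => he.edge_not_mem q q.lt_succ_self (h ▸ hu), mem_union_left _ hu,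
    mem_union_right _ (mem_walkGraph_edges.mpr ⟨q, q.lt_succ_self, rfl⟩)⟩

end IsEar

theorem exists_edge_leaving {K H : Digraph n} (hK : K.Connected) (hH : H.verts.Nonempty)
    (hsub : H.IsSubgraph K) (hne : H ≠ K) :
    ∃ a w, a ∈ H.verts ∧ (a, w) ∈ K.edges ∧ (a, w) ∉ H.edges := by
  by_contra! hclosed
  obtain ⟨v, hv⟩ := hH
  have hreach : ∀ x, K.Reaches v x → x ∈ H.verts := fun x hx => by
    induction hx with
    | refl => exact hv
    | tail _ hbc ih => exact (H.mem_verts _ (hclosed _ _ ih hbc)).2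
  have hverts : K.verts ⊆ H.verts := fun x hx => hreach x (hK.2 v (hsub.1 hv) x hx)
  have hedges : K.edges ⊆ H.edges := fun e he =>
    hclosed e.1 e.2 (hverts (K.mem_verts e he).1) he
  exact hne (ext (hsub.1.antisymm hverts) (hsub.2.antisymm hedges))

theorem exists_shortest_walk {G : Digraph n} {A : Finset (Fin n)} {w x : Fin n} (hx : x ∈ A)
    (hwx : G.Reaches w x) :
    ∃ (q : ℕ) (f : ℕ → Fin n), f 0 = w ∧ f q ∈ A ∧ (∀ i < q, f i ∉ A) ∧
      Set.InjOn f (Set.Iic q) ∧ ∀ i < q, (f i, f (i + 1)) ∈ G.edges := by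
  have hex : ∃ q, ∃ f : ℕ → Fin n, f 0 = w ∧ f q ∈ A ∧ ∀ i < q, (f i, f (i + 1)) ∈ G.edges := by
    obtain ⟨q, f, h0, hq, hf⟩ := hwx.exists_hasWalk
    exact ⟨q, f, h0, hq ▸ hx, hf⟩
  obtain ⟨f, h0, hq, hf⟩ := Nat.find_spec hex
  refine ⟨_, f, h0, hq, fun i hi hfi =>
    Nat.find_min hex hi ⟨f, h0, hfi, fun t ht => hf t (by omega)⟩, ?_, hf⟩
  intro i (hi : i ≤ Nat.find hex) i' (hi' : i' ≤ Nat.find hex) h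
  by_contra hne
  wlog hlt : i < i' generalizing i i'
  · exact this hi' hi h.symm (Ne.symm hne) (by omega)
  -- cutting out the closed subwalk from `f i` to `f i'` leaves a shorter walk into `A`
  set d := i' - i
  refine Nat.find_min hex (show Nat.find hex - d < Nat.find hex by omega)
    ⟨fun m => if m ≤ i then f m else f (m + d), by simp [h0], ?_, fun t ht => ?_⟩
  · dsimp only
    split_ifs with hle
    · rwa [show Nat.find hex - d = i by omega, h, show i' = Nat.find hex by omega]
    · rwa [show Nat.find hex - d + d = Nat.find hex by omega]
  · rcases lt_trichotomy t i with hti | rfl | hti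
    · simpa [hti.le, Nat.succ_le_of_lt hti] using hf t (by omega)
    · simpa [h, show t + 1 + d = i' + 1 by omega] using hf i' (by omega)
    · simpa [show ¬t ≤ i by omega, show ¬t + 1 ≤ i by omega, show t + 1 + d = t + d + 1 by omega]
        using hf (t + d) (by omega)

theorem exists_ear {K H : Digraph n} (hK : K.Connected) (hH : H.verts.Nonempty)
    (hsub : H.IsSubgraph K) (hne : H ≠ K) :
    ∃ g p, ∃ he : IsEar H g p, he.graph.IsSubgraph K := by
  obtain ⟨a, w, ha, haw, hawH⟩ := exists_edge_leaving hK hH hsub hne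
  obtain ⟨x, hx⟩ := hH
  obtain ⟨q, f, hf0, hfq, hfH, hinj, hf⟩ :=
    exists_shortest_walk hx (hK.2 w (K.mem_verts _ haw).2 x (hsub.1 hx))
  let g : ℕ → Fin n := fun
    | 0 => a
    | i + 1 => f i
  have hgK : ∀ i < q + 1, (g i, g (i + 1)) ∈ K.edges := by
    rintro (_ | i) hi
    · simpa [g, hf0] using haw
    · exact hf i (by omega)
  have he : IsEar H g (q + 1) := by
    refine ⟨q.succ_pos, ha, hfq, ?_, ?_, fun i hi => K.no_loops _ (hgK i hi), ?_⟩
    · rintro (_ | i) h0 hi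
      exacts [absurd h0 (lt_irrefl 0), hfH i (by omega)]
    · rintro (_ | i) ⟨h0, hi⟩ (_ | i') ⟨h0', hi'⟩ h <;> try omega
      exact congrArg (· + 1) (hinj (show i ≤ q by omega) (show i' ≤ q by omega) h)
    · rintro (_ | i) hi hmem
      · exact hawH (by simpa [g, hf0] using hmem)
      · exact hfH i (by omega) (H.mem_verts _ hmem).1
  refine ⟨g, q + 1, he, fun v hv => ?_, fun e he => ?_⟩
  · obtain ⟨i, hi, rfl⟩ := mem_walkGraph_verts.mp hv
    rcases hi.lt_or_eq with hi | rfl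
    exacts [(K.mem_verts _ (hgK i hi)).1, hsub.1 hfq]
  · obtain ⟨i, hi, rfl⟩ := mem_walkGraph_edges.mp he
    exact hgK i hi

theorem exists_ear_decomposition {K : Digraph n} (hK : K.Connected) (hE : K.edges.Nonempty) :
    ∃ (H : Digraph n) (g : ℕ → Fin n) (p : ℕ) (he : IsEar H g p),
      H.Connected ∧ K = H.union he.graph := by
  obtain ⟨v, hv⟩ := hK.1
  -- `H` is a proper connected subgraph with the most edges: adding an ear to it must give `K`
  let P : Set (Digraph n) := {H | H.IsSubgraph K ∧ H.Connected ∧ H ≠ K}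
  have hvP : (⟨{v}, ∅, by simp, by simp⟩ : Digraph n) ∈ P := by
    refine ⟨⟨by simpa using hv, empty_subset _⟩, ⟨by simp, ?_⟩, fun h => ?_⟩
    · simp only [mem_singleton]
      rintro i rfl j rfl
      exact .refl
    · obtain ⟨e, he⟩ := hE
      simp [← h] at he
  obtain ⟨H, ⟨hsub, hH, hne⟩, hmax⟩ :=
    (measure fun H : Digraph n => K.edges.card - H.edges.card).wf.has_min P ⟨_, hvP⟩
  obtain ⟨g, p, he, hgK⟩ := exists_ear hK hH.1 hsub hne
  refine ⟨H, g, p, he, hH, by_contra fun h => hmax _ ⟨union_isSubgraph hsub hgK,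
    he.connected_union hH, Ne.symm h⟩ ?_⟩
  have hcard := he.card_union_edges
  have hle := card_le_card (union_isSubgraph hsub hgK).2
  have := he.pos
  show K.edges.card - (H.union he.graph).edges.card < K.edges.card - H.edges.card
  omega

theorem IsRoseAt.exists_subgraph_circuitRank_eq_three_of_ear {H : Digraph n} {k : ℕ} {j : Fin n} {g : ℕ → Fin n}
    {p : ℕ} (hH : H.IsRoseAt k j) (hk : 2 ≤ k) (he : IsEar H g p)
    (hK : ¬(H.union he.graph).IsRose (k + 1)) :
    ∃ K : Digraph n, K.IsSubgraph (H.union he.graph) ∧ K.Connected ∧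
      (∀ k, 2 ≤ k → ¬K.IsRose k) ∧ K.circuitRank = 3 := by
  have hopen : ¬(g 0 = j ∧ g p = j) := by
    rintro ⟨h0, hp⟩
    refine hK (isRose_iff.mpr ⟨j, hH.union_cycle (he.isCycleGraph_graph (hp.trans h0.symm)) ?_⟩)
    rw [he.graph_verts_inter, h0, hp, pair_eq_singleton]
  obtain ⟨C, hC, hj, hpair, hV, hE⟩ := hH
  have hCH : ∀ i, (C i).IsSubgraph H := fun i =>
    ⟨fun x hx => hV ▸ mem_insert_of_mem (mem_biUnion.mpr ⟨i, mem_univ _, hx⟩),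
      fun e he => hE ▸ mem_biUnion.mpr ⟨i, mem_univ _, he⟩⟩
  have hpetal : ∀ v ∈ H.verts, ∃ i, v ∈ (C i).verts := by
    intro v hv
    rw [hV, mem_insert, mem_biUnion] at hv
    rcases hv with rfl | ⟨i, -, hi⟩
    exacts [⟨⟨0, by omega⟩, hj _⟩, ⟨i, hi⟩]
  have : Nontrivial (Fin k) := Fin.nontrivial_iff_two_le.mpr hk
  obtain ⟨a, b, hab, hsa, htab⟩ : ∃ a b, a ≠ b ∧ g 0 ∈ (C a).verts ∧
      (g p ∈ (C a).verts ∨ g p ∈ (C b).verts) := by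
    obtain ⟨a, ha⟩ := hpetal _ he.start_mem
    obtain ⟨c, hc⟩ := hpetal _ he.end_mem
    obtain rfl | hca := eq_or_ne c a
    · obtain ⟨b, hb⟩ := exists_ne c
      exact ⟨c, b, hb.symm, ha, Or.inl hc⟩
    · exact ⟨a, c, hca.symm, ha, Or.inr hc⟩
  have hinter := hpair a b hab
  have hsub : ((C a).union (C b)).IsSubgraph H := union_isSubgraph (hCH a) (hCH b)
  have he' : IsEar ((C a).union (C b)) g p :=
    he.mono hsub (mem_union_left _ hsa) (htab.elim (mem_union_left _) (mem_union_right _))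
  refine ⟨((C a).union (C b)).union he'.graph, hsub.union_left _,
    he'.connected_union ((hC a).1.union_of_mem (hC b).1 (hj a) (hj b)), fun k _ => ?_, ?_⟩
  · have hjb : (((C a).union (C b)).union he'.graph).IsBranchVertex j :=
      (isBranchVertex_union_of_inter_eq_singleton (hC a) (hC b) hinter).mono subset_union_left
    by_cases h0 : g 0 = j
    · obtain ⟨u, hu⟩ : ∃ u, (u, g p) ∈ ((C a).union (C b)).edges := by
        rcases htab with h | h
        · exact ((hC a).exists_in_edge h).imp fun _ => mem_union_left _
        · exact ((hC b).exists_in_edge h).imp fun _ => mem_union_right _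
      exact not_isRose_of_isBranchVertex (fun hp => hopen ⟨h0, hp⟩) (he'.isBranchVertex_end hu)
        hjb k
    · obtain ⟨w, hw⟩ := (hC a).exists_out_edge hsa
      exact not_isRose_of_isBranchVertex h0 (he'.isBranchVertex_start (mem_union_left _ hw))
        hjb k
  · rw [he'.circuitRank_union, circuitRank_union_of_inter_eq_singleton hinter,
      (hC a).circuitRank_eq_one, (hC b).circuitRank_eq_one]
    norm_num

theorem exists_subgraph_circuitRank_eq_three (m : ℕ) :
    ∀ K : Digraph n, K.Connected → (∀ k, 2 ≤ k → ¬K.IsRose k) → K.circuitRank = m + 3 →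
      ∃ K' : Digraph n, K'.IsSubgraph K ∧ K'.Connected ∧ (∀ k, 2 ≤ k → ¬K'.IsRose k) ∧
        K'.circuitRank = 3 := by
  induction m with
  | zero => exact fun K hK hrose hc => ⟨K, .refl K, hK, hrose, by simpa using hc⟩
  | succ m ih =>
    intro K hK hrose hc
    have hE : K.edges.Nonempty := by
      have := card_pos.mpr hK.1
      simp only [circuitRank] at hc
      exact card_pos.mp (by omega)
    obtain ⟨H, g, p, he, hH, rfl⟩ := exists_ear_decomposition hK hE
    have hcH : H.circuitRank = m + 3 := by
      have := he.circuitRank_union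
      push_cast at hc
      omega
    by_cases hHrose : ∃ k, 2 ≤ k ∧ H.IsRose k
    · obtain ⟨k, hk, hHk⟩ := hHrose
      obtain ⟨j, hj⟩ := isRose_iff.mp hHk
      have hkm : (k : ℤ) = m + 3 := hj.circuitRank_eq.symm.trans hcH
      exact hj.exists_subgraph_circuitRank_eq_three_of_ear (by omega) he (hrose (k + 1) (by omega))
    · obtain ⟨K', hsub, hK'⟩ := ih H hH (fun k hk h => hHrose ⟨k, hk, h⟩) hcH
      exact ⟨K', hsub.trans (isSubgraph_union_left H he.graph), hK'⟩

end Money.Digraph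

/-- if connected `G` is not a rose and `c(G) > 3`, then `G` has a
proper connected subgraph `K` that is not a rose with `c(K) = 3`. -/
theorem stmt15 {n : ℕ} (G : Money.Digraph n) (hG : G.Connected)
    (hrose : ∀ k : ℕ, 2 ≤ k → ¬G.IsRose k) (hcr : 3 < G.circuitRank) :
    ∃ K : Money.Digraph n, K.IsSubgraph G ∧ K ≠ G ∧ K.Connected ∧
      (∀ k : ℕ, 2 ≤ k → ¬K.IsRose k) ∧ K.circuitRank = 3 := by
  obtain ⟨m, hm⟩ : ∃ m : ℕ, G.circuitRank = m + 3 := ⟨(G.circuitRank - 3).toNat, by omega⟩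
  obtain ⟨K, hsub, hK, hKrose, hKc⟩ := exists_subgraph_circuitRank_eq_three m G hG hrose hm
  exact ⟨K, hsub, fun h => by rw [h] at hKc; omega, hK, hKrose, hKc⟩
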